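/- Let D be a nonempty finite type of samples, C a finite subset of D (the true-labeled samples) with τ = (|D| − |C|)/|D| the noise rate, and M : ℕ → Finset D a sequence with M_t ⊆ M_{t+1} for every t and with every sample of D eventually belonging to some M_t. Suppose moreover that for every t the set M_t ∩ C is nonempty and the growth-ratio condition |M_{t+1} \ C| · |M_t ∩ C| ≥ |M_{t+1} ∩ C| · |M_t \ C| holds. Then the memorization precision MP(t) = |M_t ∩ C| / |M_t| is monotone nonincreasing in t and tends to 1 − τ as t → ∞. -/

import Mathlib

/-!
Write `MP(t) = a_t / (a_t + b_t)` with `a_t = |M_t ∩ C|` and `b_t = |M_t \ C|`. Cross-multiplying,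
the growth condition `a_{t+1} b_t ≤ b_{t+1} a_t` is exactly `MP(t+1) ≤ MP(t)`. Since `D` is finite
and `M` is nested and exhausts `D`, eventually `M_t = D`, so `MP` is eventually constant, equal to
`|C| / |D| = 1 - τ`.
-/

open Filter

lemma div_add_le_div_add_of_mul_le_mul {a b c d : ℝ} (ha : 0 ≤ a) (hc : 0 ≤ c) (hd : 0 ≤ d)
    (hab : 0 < a + b) (h : c * b ≤ d * a) : c / (c + d) ≤ a / (a + b) := by
  rcases (add_nonneg hc hd).eq_or_lt with hcd | hcd
  · rw [← hcd, div_zero]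
    positivity
  · rw [div_le_div_iff₀ hcd hab]
    linarith

namespace Finset

variable {D : Type*} [DecidableEq D]

noncomputable def precision (C s : Finset D) : ℝ := (#(s ∩ C) : ℝ) / #s

lemma precision_eq (C s : Finset D) :
    precision C s = (#(s ∩ C) : ℝ) / (#(s ∩ C) + #(s \ C)) := by
  rw [precision, ← Nat.cast_add, card_inter_add_card_sdiff]

lemma precision_le_precision {C s t : Finset D} (hs : s.Nonempty)
    (h : #(t ∩ C) * #(s \ C) ≤ #(t \ C) * #(s ∩ C)) : precision C t ≤ precision C s := by
  rw [precision_eq, precision_eq]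
  refine div_add_le_div_add_of_mul_le_mul (by positivity) (by positivity) (by positivity) ?_
    (by exact_mod_cast h)
  rw [← Nat.cast_add, card_inter_add_card_sdiff]
  exact_mod_cast hs.card_pos

lemma precision_univ [Fintype D] [Nonempty D] (C : Finset D) :
    precision C univ = 1 - ((Fintype.card D : ℝ) - #C) / Fintype.card D := by
  have hD : (Fintype.card D : ℝ) ≠ 0 := by positivity
  rw [precision, univ_inter, card_univ, sub_div, div_self hD, sub_sub_cancel]

omit [DecidableEq D] in
lemma eventually_eq_univ_of_monotone [Fintype D] {M : ℕ → Finset D} (hM : Monotone M)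
    (hcover : ∀ x, ∃ t, x ∈ M t) : ∀ᶠ t in atTop, M t = univ := by
  have hmem : ∀ᶠ t in atTop, ∀ x, x ∈ M t := by
    refine eventually_all.2 fun x => ?_
    obtain ⟨t₀, hx⟩ := hcover x
    filter_upwards [eventually_ge_atTop t₀] with t ht using hM ht hx
  filter_upwards [hmem] with t ht using eq_univ_of_forall ht

end Finset

open Finset in
theorem memorization_precision_antitone_tendsto_general
    {D : Type*} [Fintype D] [DecidableEq D]
    (C : Finset D)
    (M : ℕ → Finset D)
    (hmono : ∀ t, M t ⊆ M (t + 1))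
    (hev : ∀ x : D, ∃ t, x ∈ M t)
    (hne : ∀ t, (M t ∩ C).Nonempty)
    (hgrow : ∀ t, (M (t + 1) \ C).card * (M t ∩ C).card ≥
                  (M (t + 1) ∩ C).card * (M t \ C).card) :
    Antitone (fun t => ((M t ∩ C).card : ℝ) / (M t).card) ∧
    Filter.Tendsto (fun t => ((M t ∩ C).card : ℝ) / (M t).card)
      Filter.atTop
      (nhds (1 - ((Fintype.card D : ℝ) - C.card) / Fintype.card D)) := by
  have hM_nonempty (t : ℕ) : (M t).Nonempty := (hne t).mono inter_subset_left
  have : Nonempty D := (hM_nonempty 0).to_type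
  refine ⟨antitone_nat_of_succ_le fun t => precision_le_precision (hM_nonempty t) (hgrow t), ?_⟩
  rw [← precision_univ]
  refine tendsto_const_nhds.congr' ?_
  filter_upwards [eventually_eq_univ_of_monotone (monotone_nat_of_le_succ hmono) hev] with t ht
  rw [ht]
  rfl

/-- Full statement of Theorem 2: memorization precision MP(t) = |M_t ∩ C| / |M_t|
is monotone nonincreasing and converges to 1 - τ, with τ = (|D| - |C|)/|D| the
noise rate, under nestedness, eventual memorization of all samples, and the
growth-ratio condition on memorized false- vs. true-labeled samples. -/
theorem memorization_precision_antitone_tendsto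
    {D : Type*} [Fintype D] [Nonempty D] [DecidableEq D]
    (C : Finset D)
    (M : ℕ → Finset D)
    (hmono : ∀ t, M t ⊆ M (t + 1))
    (hev : ∀ x : D, ∃ t, x ∈ M t)
    (hne : ∀ t, (M t ∩ C).Nonempty)
    (hgrow : ∀ t, (M (t + 1) \ C).card * (M t ∩ C).card ≥
                  (M (t + 1) ∩ C).card * (M t \ C).card) :
    Antitone (fun t => ((M t ∩ C).card : ℝ) / (M t).card) ∧
    Filter.Tendsto (fun t => ((M t ∩ C).card : ℝ) / (M t).card)
      Filter.atTop
      (nhds (1 - ((Fintype.card D : ℝ) - C.card) / Fintype.card D)) :=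
  memorization_precision_antitone_tendsto_general C M hmono hev hne hgrow
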